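/- Let V be a finite type, let E be a finite set of ordered pairs (j,k) of distinct elements of V (the edges of a graph, each listed once), and let Φ : V → ℝ. Define g₂ : ℝ → ℝ by g₂(x) = ∫ t in 0..x, (2·Real.arctan (Real.exp t) − π/2) and S : (V → ℝ) → ℝ by S(ρ) = ∑_{(j,k) ∈ E} (g₂(ρ j − ρ k) − (π/2)·(ρ j + ρ k)) + ∑_{j ∈ V} Φ j · ρ j. Then S is differentiable, and ρ is a critical point of S (fderiv ℝ S ρ = 0) if and only if for every vertex j the circle-pattern equation holds: 2 · ∑_{k neighboring j} Real.arctan (Real.exp (ρ k − ρ j)) = Φ j, where the sum extends over all k with (j,k) ∈ E or (k,j) ∈ E. -/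

import Mathlib

/-!
Since `g₂' x = 2 arctan (eˣ) - π/2` and `arctan (eˣ) + arctan (e⁻ˣ) = π/2`, the edge term
`g₂ (ρ j - ρ k) - π/2 (ρ j + ρ k)` has partial derivatives `-2 arctan (e^(ρ k - ρ j))` in `ρ j`
and `-2 arctan (e^(ρ j - ρ k))` in `ρ k`. Hence `∂S/∂ρ j = Φ j - 2 ∑ arctan (e^(ρ k - ρ j))`,
the sum running over the edges at `j`; since `E` never contains an edge together with its
reverse, every neighbour `k` of `j` occurs exactly once.
-/

open Real

noncomputable def circlePatternG₂ (x : ℝ) : ℝ :=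
  ∫ t in (0 : ℝ)..x, (2 * arctan (exp t) - π / 2)

open Finset
open ContinuousLinearMap (proj)

theorem hasDerivAt_circlePatternG₂ (x : ℝ) :
    HasDerivAt circlePatternG₂ (2 * arctan (exp x) - π / 2) x := by
  have hcont : Continuous fun t => 2 * arctan (exp t) - π / 2 := by fun_prop
  exact intervalIntegral.integral_hasDerivAt_right (hcont.intervalIntegrable 0 x)
    (hcont.stronglyMeasurableAtFilter _ _) hcont.continuousAt

theorem arctan_exp_neg (x : ℝ) : arctan (exp (-x)) = π / 2 - arctan (exp x) := by
  rw [exp_neg, arctan_inv_of_pos (exp_pos x)]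

/-- For orthogonal circles of radii `exp (ρ j)` and `exp (ρ k)`, the kite spanned by the two
centres and the two intersection points has angle `kiteAngle ρ j k` at the centre of circle `j`. -/
noncomputable def kiteAngle {V : Type*} (ρ : V → ℝ) (j k : V) : ℝ := 2 * arctan (exp (ρ k - ρ j))

section

variable {V : Type*} [Fintype V]

theorem sum_filter_fst_eq [DecidableEq V] {M : Type*} [AddCommMonoid M] (E : Finset (V × V))
    (a : V → V → M) (j : V) :
    ∑ e ∈ E with e.1 = j, a e.1 e.2 = ∑ k with (j, k) ∈ E, a j k := by
  refine sum_nbij' Prod.snd (Prod.mk j) ?_ ?_ ?_ ?_ ?_ <;> aesop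

theorem sum_filter_snd_eq [DecidableEq V] {M : Type*} [AddCommMonoid M] (E : Finset (V × V))
    (a : V → V → M) (j : V) :
    ∑ e ∈ E with e.2 = j, a e.2 e.1 = ∑ k with (k, j) ∈ E, a j k := by
  refine sum_nbij' Prod.fst (Prod.mk · j) ?_ ?_ ?_ ?_ ?_ <;> aesop

theorem sum_ite_incident_eq_sum_adjacent [DecidableEq V] {M : Type*} [AddCommMonoid M]
    {E : Finset (V × V)} (hE : ∀ e ∈ E, e.swap ∉ E) (a : V → V → M) (j : V) :
    ∑ e ∈ E, ((if e.1 = j then a e.1 e.2 else 0) + (if e.2 = j then a e.2 e.1 else 0)) =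
      ∑ k with (j, k) ∈ E ∨ (k, j) ∈ E, a j k := by
  rw [sum_add_distrib, ← sum_filter, ← sum_filter, sum_filter_fst_eq, sum_filter_snd_eq,
    filter_or, sum_union]
  exact disjoint_filter.2 fun k _ => hE (j, k)

theorem ContinuousLinearMap.eq_zero_iff_forall_apply_single [DecidableEq V] {R M : Type*}
    [Semiring R] [TopologicalSpace R] [AddCommMonoid M] [Module R M] [TopologicalSpace M]
    (T : (V → R) →L[R] M) : T = 0 ↔ ∀ j, T (Pi.single j 1) = 0 := by
  refine ⟨fun h j => by simp [h], fun h => ContinuousLinearMap.coe_injective ?_⟩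
  exact (Pi.basisFun R V).ext fun j => by simpa using h j

theorem hasFDerivAt_circlePatternG₂_edge (ρ : V → ℝ) (a b : V) :
    HasFDerivAt (fun ρ : V → ℝ => circlePatternG₂ (ρ a - ρ b) - π / 2 * (ρ a + ρ b))
      (-(kiteAngle ρ a b • proj a + kiteAngle ρ b a • proj b) : (V → ℝ) →L[ℝ] ℝ) ρ := by
  have hdiff : HasFDerivAt (fun ρ : V → ℝ => ρ a - ρ b)
      (proj a - proj b : (V → ℝ) →L[ℝ] ℝ) ρ :=
    (hasFDerivAt_apply a ρ).fun_sub (hasFDerivAt_apply b ρ)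
  have hsum : HasFDerivAt (fun ρ : V → ℝ => ρ a + ρ b)
      (proj a + proj b : (V → ℝ) →L[ℝ] ℝ) ρ :=
    (hasFDerivAt_apply a ρ).fun_add (hasFDerivAt_apply b ρ)
  refine (((hasDerivAt_circlePatternG₂ _).comp_hasFDerivAt ρ hdiff).fun_sub
    (hsum.const_mul (π / 2))).congr_fderiv ?_
  ext x
  simp only [sub_apply, add_apply, neg_apply, smul_apply, ContinuousLinearMap.proj_apply,
    smul_eq_mul, kiteAngle]
  rw [← neg_sub (ρ a) (ρ b), arctan_exp_neg]
  ring

noncomputable def circlePatternFunctional (E : Finset (V × V)) (Φ ρ : V → ℝ) : ℝ :=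
  ∑ e ∈ E, (circlePatternG₂ (ρ e.1 - ρ e.2) - π / 2 * (ρ e.1 + ρ e.2)) + ∑ j, Φ j * ρ j

theorem hasFDerivAt_circlePatternFunctional (E : Finset (V × V)) (Φ ρ : V → ℝ) :
    HasFDerivAt (circlePatternFunctional E Φ)
      (∑ e ∈ E, -(kiteAngle ρ e.1 e.2 • proj e.1 + kiteAngle ρ e.2 e.1 • proj e.2) +
        ∑ j, Φ j • proj j : (V → ℝ) →L[ℝ] ℝ) ρ :=
  (HasFDerivAt.fun_sum fun e _ => hasFDerivAt_circlePatternG₂_edge ρ e.1 e.2).fun_add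
    (HasFDerivAt.fun_sum fun j _ => (hasFDerivAt_apply j ρ).const_mul (Φ j))

theorem fderiv_circlePatternFunctional_apply_single [DecidableEq V] {E : Finset (V × V)}
    (hE : ∀ e ∈ E, e.swap ∉ E) (Φ ρ : V → ℝ) (j : V) :
    fderiv ℝ (circlePatternFunctional E Φ) ρ (Pi.single j 1) =
      Φ j - ∑ k with (j, k) ∈ E ∨ (k, j) ∈ E, kiteAngle ρ j k := by
  rw [(hasFDerivAt_circlePatternFunctional E Φ ρ).fderiv,
    ← sum_ite_incident_eq_sum_adjacent hE]
  simp only [sum_add_distrib, sum_neg_distrib, add_apply, neg_apply, _root_.sum_apply,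
    smul_apply, ContinuousLinearMap.proj_apply, Pi.single_apply, smul_eq_mul, mul_ite, mul_one,
    mul_zero, sum_ite_eq', mem_univ, if_true]
  ring

end

theorem circlePattern_functional_critical_points_general
    (V : Type*) [Fintype V] [DecidableEq V] (E : Finset (V × V))
    (hE' : ∀ e ∈ E, Prod.swap e ∉ E) (Φ : V → ℝ)
    (S : (V → ℝ) → ℝ)
    (hS : ∀ ρ : V → ℝ, S ρ =
      ∑ e ∈ E, (circlePatternG₂ (ρ e.1 - ρ e.2) - (π / 2) * (ρ e.1 + ρ e.2)) +
        ∑ j : V, Φ j * ρ j) :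
    Differentiable ℝ S ∧
      ∀ ρ : V → ℝ, fderiv ℝ S ρ = 0 ↔
        ∀ j : V, 2 * ∑ k ∈ Finset.univ.filter (fun k => (j, k) ∈ E ∨ (k, j) ∈ E),
            arctan (exp (ρ k - ρ j)) = Φ j := by
  obtain rfl : S = circlePatternFunctional E Φ := funext hS
  refine ⟨fun ρ => (hasFDerivAt_circlePatternFunctional E Φ ρ).differentiableAt,
    fun ρ => ?_⟩
  rw [ContinuousLinearMap.eq_zero_iff_forall_apply_single]
  refine forall_congr' fun j => ?_
  rw [fderiv_circlePatternFunctional_apply_single hE', sub_eq_zero, eq_comm]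
  simp only [kiteAngle, mul_sum]

/-- The circle-pattern functional of Bobenko–Springborn is differentiable, and
its critical points are exactly the solutions of the circle-pattern equations
`2 ∑_k arctan (exp (ρ k − ρ j)) = Φ j`. -/
theorem circlePattern_functional_critical_points
    (V : Type*) [Fintype V] [DecidableEq V] (E : Finset (V × V))
    (hE : ∀ e ∈ E, e.1 ≠ e.2) (hE' : ∀ e ∈ E, Prod.swap e ∉ E) (Φ : V → ℝ)
    (S : (V → ℝ) → ℝ)
    (hS : ∀ ρ : V → ℝ, S ρ =
      ∑ e ∈ E, (circlePatternG₂ (ρ e.1 - ρ e.2) - (π / 2) * (ρ e.1 + ρ e.2)) +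
        ∑ j : V, Φ j * ρ j) :
    Differentiable ℝ S ∧
      ∀ ρ : V → ℝ, fderiv ℝ S ρ = 0 ↔
        ∀ j : V, 2 * ∑ k ∈ Finset.univ.filter (fun k => (j, k) ∈ E ∨ (k, j) ∈ E),
            arctan (exp (ρ k - ρ j)) = Φ j :=
  circlePattern_functional_critical_points_general V E hE' Φ S hS
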